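/- Let N ≥ 1 be an integer, M > 1, A > 0, B > 0, and set f(y) = (1 − |y|²)^{1/(M−1)} for y in the open unit ball of ℝ^N, D(y) = √(1 + 4|y|² / (A^{2(M−1)} B²)), and define u(x) = A^{−1} f(x/B) for |x| < B. Then for every x with |x| < B, writing y = x/B, the identity div_x ( u ∇_x(u^{M−1}) / √(1 + |∇_x(u^{M−1})|²) )(x) = − 2 (y · ∇f(y)) / (A^M B² D(y)) − (2 N f(y)) / (A^M B² D(y)³) · ( 1 + ((N−1)/N) · 4|y|² / (A^{2(M−1)} B²) ) holds. -/

import Mathlib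

/-!
On the ball `‖x‖ < B` the pressure `u^{M-1} = A^{1-M} (1 - ‖x/B‖²)` is a quadratic polynomial,
so its gradient is a multiple of `x` and the flux is the radial field `x ↦ φ(x) x` with
`φ(x) = -2 f(y) / (A^M B² D(y))`, `y = x/B`. For a radial field `div (φ x) = N φ + Dφ(x) x`,
and the radial derivative of `f / D` at `y` is `(y · ∇f(y)) / D - f(y) (D² - 1) / D³`.
Collecting the terms in `f(y)` gives the factor `N D² - (D² - 1) = N + (N - 1) (D² - 1)`.
-/

open RealInnerProductSpace

noncomputable section

/-- Classical divergence of a vector field on `ℝ^N`: the sum of the partial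
derivatives of the components. -/
def divergence {N : ℕ} (V : EuclideanSpace ℝ (Fin N) → EuclideanSpace ℝ (Fin N))
    (x : EuclideanSpace ℝ (Fin N)) : ℝ :=
  ∑ i, ⟪fderiv ℝ V x (EuclideanSpace.single i 1), EuclideanSpace.single i 1⟫

/-- The stationary profile `f(y) = (1 − |y|²)^{1/(M−1)}`. -/
def profSL {N : ℕ} (M : ℝ) (y : EuclideanSpace ℝ (Fin N)) : ℝ :=
  (1 - ‖y‖ ^ 2) ^ (1/(M-1))

/-- The flux `u ∇(u^{M−1}) / √(1 + |∇(u^{M−1})|²)` of the speed-limited porous medium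
equation for a stationary function `u`. -/
def fluxSLx {N : ℕ} (M : ℝ) (u : EuclideanSpace ℝ (Fin N) → ℝ)
    (x : EuclideanSpace ℝ (Fin N)) : EuclideanSpace ℝ (Fin N) :=
  (u x / Real.sqrt (1 + ‖gradient (fun y => u y ^ (M-1)) x‖ ^ 2)) •
    gradient (fun y => u y ^ (M-1)) x

open Real

theorem Filter.EventuallyEq.divergence_eq {N : ℕ}
    {V W : EuclideanSpace ℝ (Fin N) → EuclideanSpace ℝ (Fin N)} {x : EuclideanSpace ℝ (Fin N)}
    (h : V =ᶠ[nhds x] W) : divergence V x = divergence W x := by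
  simp only [divergence, h.fderiv_eq]

theorem divergence_smul_self {N : ℕ} {φ : EuclideanSpace ℝ (Fin N) → ℝ}
    {x : EuclideanSpace ℝ (Fin N)} (hφ : DifferentiableAt ℝ φ x) :
    divergence (fun z => φ z • z) x = N * φ x + fderiv ℝ φ x x := by
  have hφx : fderiv ℝ φ x x = ∑ i, x i * fderiv ℝ φ x (EuclideanSpace.single i 1) := by
    conv_lhs => arg 2; rw [← (EuclideanSpace.basisFun (Fin N) ℝ).sum_repr x]
    simp
  have hd : HasFDerivAt (fun z => φ z • z)
      (φ x • ContinuousLinearMap.id ℝ _ + (fderiv ℝ φ x).smulRight x) x :=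
    hφ.hasFDerivAt.smul (hasFDerivAt_id x)
  rw [divergence, hd.fderiv, hφx]
  simp [inner_add_left, Finset.sum_add_distrib, mul_comm, EuclideanSpace.inner_single_right]

theorem norm_inv_smul_lt_one {F : Type*} [NormedAddCommGroup F] [NormedSpace ℝ F] {B : ℝ}
    (hB : 0 < B) {z : F} (hz : ‖z‖ < B) : ‖B⁻¹ • z‖ < 1 := by
  rwa [norm_smul, norm_inv, norm_of_nonneg hB.le, inv_mul_lt_one₀ hB]

section InnerProductSpace

variable {F : Type*} [NormedAddCommGroup F] [InnerProductSpace ℝ F]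

theorem gradient_const_sub_mul_norm_sq [CompleteSpace F] (a b : ℝ) (x : F) :
    gradient (fun z => a - b * ‖z‖ ^ 2) x = (-2 * b) • x := by
  refine HasGradientAt.gradient ?_
  rw [hasGradientAt_iff_hasFDerivAt]
  refine ((hasFDerivAt_const a x).sub
    ((hasStrictFDerivAt_norm_sq x).hasFDerivAt.const_mul b)).congr_fderiv ?_
  ext v
  simp only [zero_sub, neg_apply, smul_apply, coe_innerSL_apply, nsmul_eq_mul, Nat.cast_ofNat,
    smul_eq_mul, neg_mul, neg_smul, map_neg, map_smul, InnerProductSpace.toDual_apply_apply,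
    neg_inj]
  ring

theorem DifferentiableAt.div_sqrt_one_add_mul_norm_sq {f : F → ℝ} {c : ℝ} {y : F}
    (hf : DifferentiableAt ℝ f y) (hc : 0 < 1 + c * ‖y‖ ^ 2) :
    DifferentiableAt ℝ (fun z => f z / √(1 + c * ‖z‖ ^ 2)) y := by
  simp only [div_eq_mul_inv]
  exact hf.mul ((((differentiableAt_id.norm_sq ℝ).const_mul c).const_add 1).sqrt hc.ne' |>.inv
    (sqrt_pos.2 hc).ne')

theorem fderiv_div_sqrt_one_add_mul_norm_sq_apply_self {f : F → ℝ} {c : ℝ} {y : F}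
    (hf : DifferentiableAt ℝ f y) (hc : 0 < 1 + c * ‖y‖ ^ 2) :
    fderiv ℝ (fun z => f z / √(1 + c * ‖z‖ ^ 2)) y y =
      fderiv ℝ f y y / √(1 + c * ‖y‖ ^ 2) - c * f y * ‖y‖ ^ 2 / √(1 + c * ‖y‖ ^ 2) ^ 3 := by
  have hq : HasFDerivAt (fun z : F => 1 + c * ‖z‖ ^ 2) (c • (2 : ℕ) • innerSL ℝ y) y :=
    ((hasStrictFDerivAt_norm_sq y).hasFDerivAt.const_mul c).const_add 1
  have hD := (hasDerivAt_inv (sqrt_pos.mpr hc).ne').comp_hasFDerivAt y (hq.sqrt hc.ne')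
  simp only [Function.comp_def] at hD
  simp only [div_eq_mul_inv]
  rw [(hf.hasFDerivAt.fun_mul hD).fderiv]
  simp only [one_div, mul_inv_rev, neg_smul, smul_neg, add_apply, neg_apply, smul_apply,
    coe_innerSL_apply, inner_self_eq_norm_sq_to_K, ringHom_apply, nsmul_eq_mul, Nat.cast_ofNat,
    smul_eq_mul]
  ring

end InnerProductSpace

theorem profSL_nonneg {N : ℕ} (M : ℝ) {y : EuclideanSpace ℝ (Fin N)} (hy : ‖y‖ ≤ 1) :
    0 ≤ profSL M y :=
  rpow_nonneg (by nlinarith [norm_nonneg y]) _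

theorem profSL_rpow_sub_one {N : ℕ} {M : ℝ} (hM : M ≠ 1) {y : EuclideanSpace ℝ (Fin N)}
    (hy : ‖y‖ ≤ 1) : profSL M y ^ (M - 1) = 1 - ‖y‖ ^ 2 := by
  have : 0 ≤ 1 - ‖y‖ ^ 2 := by nlinarith [norm_nonneg y]
  rw [profSL, ← rpow_mul this, one_div_mul_cancel (sub_ne_zero.mpr hM), rpow_one]

theorem differentiableAt_profSL {N : ℕ} (M : ℝ) {y : EuclideanSpace ℝ (Fin N)} (hy : ‖y‖ < 1) :
    DifferentiableAt ℝ (profSL M) y := by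
  have : 0 < 1 - ‖y‖ ^ 2 := by nlinarith [norm_nonneg y]
  exact ((differentiableAt_const 1).sub (differentiableAt_id.norm_sq ℝ)).rpow_const
    (Or.inl this.ne')

theorem gradient_rpow_sub_one_profSL {N : ℕ} {M A B : ℝ} (hM : M ≠ 1) (hA : 0 ≤ A) (hB : 0 < B)
    {z : EuclideanSpace ℝ (Fin N)} (hz : ‖z‖ < B) :
    gradient (fun w => (A⁻¹ * profSL M (B⁻¹ • w)) ^ (M - 1)) z =
      (-2 / (A ^ (M - 1) * B ^ 2)) • z := by
  have hev : (fun w => (A⁻¹ * profSL M (B⁻¹ • w)) ^ (M - 1)) =ᶠ[nhds z]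
      fun w => (A ^ (M - 1))⁻¹ - (A ^ (M - 1) * B ^ 2)⁻¹ * ‖w‖ ^ 2 := by
    filter_upwards [Metric.isOpen_ball.mem_nhds (mem_ball_zero_iff.2 hz)] with w hw
    have hw' := (norm_inv_smul_lt_one hB (mem_ball_zero_iff.1 hw)).le
    rw [mul_rpow (inv_nonneg.2 hA) (profSL_nonneg M hw'), inv_rpow hA,
      profSL_rpow_sub_one hM hw', norm_smul, norm_inv, norm_of_nonneg hB.le]
    field_simp
  rw [hev.gradient_eq, gradient_const_sub_mul_norm_sq, div_eq_mul_inv]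

theorem fluxSLx_eq_smul_self {N : ℕ} {M A B : ℝ} (hM : M ≠ 1) (hA : 0 < A) (hB : 0 < B)
    {z : EuclideanSpace ℝ (Fin N)} (hz : ‖z‖ < B) :
    fluxSLx M (fun w => A⁻¹ * profSL M (B⁻¹ • w)) z =
      (-2 / (A ^ M * B ^ 2) * (profSL M (B⁻¹ • z) /
        √(1 + 4 / (A ^ (2 * (M - 1)) * B ^ 2) * ‖B⁻¹ • z‖ ^ 2))) • z := by
  have hAM : A ^ M = A * A ^ (M - 1) := by
    rw [rpow_sub_one hA.ne']; field_simp
  have hA2 : A ^ (2 * (M - 1)) = (A ^ (M - 1)) ^ 2 := by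
    rw [mul_comm, ← rpow_mul_natCast hA.le]; norm_num
  have hAM1 : 0 < A ^ (M - 1) := rpow_pos_of_pos hA _
  rw [fluxSLx, gradient_rpow_sub_one_profSL hM hA.le hB hz, smul_smul, norm_smul, norm_smul,
    norm_inv, norm_of_nonneg hB.le, hAM, hA2]
  congr 1
  rw [norm_div, norm_neg, Real.norm_two, norm_of_nonneg (by positivity : 0 ≤ A ^ (M - 1) * B ^ 2)]
  field_simp
  ring_nf

/-- explicit divergence computation: for `u(x) = A⁻¹ f(x/B)` with
`f(y) = (1 − |y|²)^{1/(M−1)}` and `D(y) = √(1 + 4|y|²/(A^{2(M−1)} B²))`, for `|x| < B`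
and `y = x/B` one has
`div_x( u ∇_x(u^{M−1}) / √(1+|∇_x(u^{M−1})|²) )(x)
  = −2 (y·∇f(y))/(A^M B² D(y)) − (2N f(y))/(A^M B² D(y)³) (1 + ((N−1)/N) 4|y|²/(A^{2(M−1)}B²))`. -/
theorem stmt_7 (N : ℕ) (hN : 1 ≤ N) (M A B : ℝ) (hM : 1 < M) (hA : 0 < A) (hB : 0 < B) :
    ∀ x : EuclideanSpace ℝ (Fin N), ‖x‖ < B →
      divergence (fluxSLx M (fun z => A⁻¹ * profSL M (B⁻¹ • z))) x =
        -2 * ⟪B⁻¹ • x, gradient (profSL M) (B⁻¹ • x)⟫ /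
            (A ^ M * B ^ 2 * Real.sqrt (1 + 4 * ‖B⁻¹ • x‖ ^ 2 / (A ^ (2*(M-1)) * B ^ 2)))
          - 2 * N * profSL M (B⁻¹ • x) /
              (A ^ M * B ^ 2 *
                Real.sqrt (1 + 4 * ‖B⁻¹ • x‖ ^ 2 / (A ^ (2*(M-1)) * B ^ 2)) ^ 3) *
            (1 + ((N : ℝ) - 1) / N * (4 * ‖B⁻¹ • x‖ ^ 2 / (A ^ (2*(M-1)) * B ^ 2))) := by
  intro x hx
  set c := 4 / (A ^ (2 * (M - 1)) * B ^ 2) with hc_def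
  set y := B⁻¹ • x with hy_def
  set g := fun w : EuclideanSpace ℝ (Fin N) => profSL M w / √(1 + c * ‖w‖ ^ 2)
  have hy : ‖y‖ < 1 := norm_inv_smul_lt_one hB hx
  have hc : 0 < 1 + c * ‖y‖ ^ 2 := by positivity
  have hf := differentiableAt_profSL M hy
  have hg : DifferentiableAt ℝ g y := hf.div_sqrt_one_add_mul_norm_sq hc
  have hφ : HasFDerivAt (fun z => -2 / (A ^ M * B ^ 2) * g (B⁻¹ • z))
      ((-2 / (A ^ M * B ^ 2)) • (fderiv ℝ g y).comp (B⁻¹ • ContinuousLinearMap.id ℝ _)) x :=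
    (hg.hasFDerivAt.comp x ((hasFDerivAt_id x).const_smul B⁻¹)).const_mul _
  have hflux : fluxSLx M (fun z => A⁻¹ * profSL M (B⁻¹ • z)) =ᶠ[nhds x]
      fun z => (-2 / (A ^ M * B ^ 2) * g (B⁻¹ • z)) • z := by
    filter_upwards [Metric.isOpen_ball.mem_nhds (mem_ball_zero_iff.2 hx)] with z hz
    exact fluxSLx_eq_smul_self (by linarith) hA hB (mem_ball_zero_iff.1 hz)
  rw [hflux.divergence_eq, divergence_smul_self hφ.differentiableAt, hφ.fderiv]
  simp only [FunLike.coe_smul, Pi.smul_apply, ContinuousLinearMap.coe_comp,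
    Function.comp_apply, ContinuousLinearMap.id_apply, smul_eq_mul]
  rw [fderiv_div_sqrt_one_add_mul_norm_sq_apply_self hf hc, inner_gradient_right, conj_trivial,
    mul_div_right_comm 4]
  simp only [g, ← hc_def, ← hy_def]
  have hD := sqrt_pos.2 hc
  have hD2 := sq_sqrt hc.le
  generalize √(1 + c * ‖y‖ ^ 2) = D at hD hD2 ⊢
  have hN0 : (N : ℝ) ≠ 0 := Nat.cast_ne_zero.2 (Nat.one_le_iff_ne_zero.1 hN)
  field_simp
  rw [hD2]
  ring

end
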